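/- arXiv:2601.13026 — 6 statements merged into one kernel-verified Lean document; each statement's English description precedes it below -/
import Mathlib

section
/- For any admissible policy π with occupancy measures x^a_p(π) satisfying Σ_a x^a_p(π)(I - βP^a) = p, and any stationary deterministic policy S with cost vector F(S), the following decomposition identity holds: F_p(S) + Σ_{a < a'} Σ_{j ∈ S_{a'}} f_j^{a,a'}(S) x_{pj}^{a}(π) = F_p(π) + Σ_{a' < a} Σ_{j ∈ S_{a'}} f_j^{a',a}(S) x_{pj}^{a}(π), where F_p(π) = Σ_a x_p^a(π) · h^a and F_p(S) = p · F(S). -/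
/-!
Write `adv a := h^a + β P^a F - F` for the advantage of action `a` over the policy `S`.
Then `f^{a,a'} = adv a - adv a'`, and `adv a'` vanishes on `S_{a'}` by the Bellman equation,
so both triangular sums are pieces of `∑_a x^a ⬝ adv a`, the diagonal pieces being zero.
Pairing the flow constraints with `F` evaluates that total as `F_p(π) - p ⬝ F(S)`.
-/

open Matrix

section Advantage

variable {N R : Type*} [Fintype N] [CommRing R]

def advantage (h : N → R) (P : Matrix N N R) (β : R) (F : N → R) : N → R :=
  h + β • (P *ᵥ F) - F

lemma advantage_sub_advantage_apply (h h' : N → R) (P P' : Matrix N N R) (β : R) (F : N → R)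
    (j : N) :
    advantage h P β F j - advantage h' P' β F j = h j - h' j + β * ((P - P') *ᵥ F) j := by
  simp only [advantage, sub_mulVec, Pi.sub_apply, Pi.add_apply, Pi.smul_apply, smul_eq_mul]
  ring

lemma advantage_apply_eq_zero {h : N → R} {P : Matrix N N R} {β : R} {F : N → R} {j : N}
    (hj : F j = h j + β * (P *ᵥ F) j) : advantage h P β F j = 0 := by
  simp only [advantage, Pi.sub_apply, Pi.add_apply, Pi.smul_apply, smul_eq_mul]
  rw [← hj, sub_self]

variable [DecidableEq N]

lemma dotProduct_advantage (x h : N → R) (P : Matrix N N R) (β : R) (F : N → R) :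
    x ⬝ᵥ advantage h P β F = x ⬝ᵥ h - (x ᵥ* (1 - β • P)) ⬝ᵥ F := by
  rw [advantage, vecMul_sub, vecMul_one, vecMul_smul, sub_dotProduct, smul_dotProduct,
    ← dotProduct_mulVec, dotProduct_sub, dotProduct_add, dotProduct_smul]
  ring

lemma sum_dotProduct_advantage {ι : Type*} [Fintype ι] (P : ι → Matrix N N R) (β : R)
    (h x : ι → N → R) (p F : N → R) (hflow : ∑ a, x a ᵥ* (1 - β • P a) = p) :
    ∑ a, x a ⬝ᵥ advantage (h a) (P a) β F = ∑ a, x a ⬝ᵥ h a - p ⬝ᵥ F := by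
  simp only [dotProduct_advantage, Finset.sum_sub_distrib, ← hflow, sum_dotProduct]

end Advantage

lemma Finset.sum_sum_eq_sum_lt_add_sum_gt {ι M : Type*} [Fintype ι] [LinearOrder ι]
    [AddCommMonoid M] (g : ι → ι → M) (hg : ∀ a, g a a = 0) :
    ∑ a, ∑ a', g a a' =
      ∑ a, ∑ a', (if a < a' then g a a' else 0) + ∑ a, ∑ a', (if a' < a then g a a' else 0) := by
  rw [← Finset.sum_add_distrib]
  refine Finset.sum_congr rfl fun a _ => ?_
  rw [← Finset.sum_add_distrib]
  refine Finset.sum_congr rfl fun a' _ => ?_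
  rcases lt_trichotomy a a' with hlt | rfl | hgt
  · simp [hlt, hlt.not_gt]
  · simp [hg]
  · simp [hgt, hgt.not_gt]

theorem stmt7_general {N : Type*} [Fintype N] [DecidableEq N] {A : ℕ}
    (P : Fin (A + 1) → Matrix N N ℝ)
    (β : ℝ)
    (h : Fin (A + 1) → N → ℝ) (p : N → ℝ)
    (σ : N → Fin (A + 1)) (F : N → ℝ)
    (hF : ∀ i, F i = h (σ i) i + β * (P (σ i) *ᵥ F) i)
    (x : Fin (A + 1) → N → ℝ)
    (hflow : (∑ a, x a ᵥ* ((1 : Matrix N N ℝ) - β • P a)) = p) :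
    p ⬝ᵥ F +
      ∑ a, ∑ a', (if a < a' then
        ∑ j ∈ Finset.univ.filter (fun j => σ j = a'),
          (h a j - h a' j + β * ((P a - P a') *ᵥ F) j) * x a j
        else 0)
    =
    (∑ a, x a ⬝ᵥ h a) +
      ∑ a, ∑ a', (if a' < a then
        ∑ j ∈ Finset.univ.filter (fun j => σ j = a'),
          (h a' j - h a j + β * ((P a' - P a) *ᵥ F) j) * x a j
        else 0) := by
  have hadv : ∀ j, advantage (h (σ j)) (P (σ j)) β F j = 0 :=
    fun j => advantage_apply_eq_zero (hF j)
  set g := fun a a' => ∑ j ∈ Finset.univ.filter (fun j => σ j = a'),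
    advantage (h a) (P a) β F j * x a j
  have hg : ∀ a a', ∑ j ∈ Finset.univ.filter (fun j => σ j = a'),
      (h a j - h a' j + β * ((P a - P a') *ᵥ F) j) * x a j = g a a' := by
    refine fun a a' => Finset.sum_congr rfl fun j hj => ?_
    obtain rfl := (Finset.mem_filter.mp hj).2
    rw [← advantage_sub_advantage_apply, hadv, sub_zero]
  have hg' : ∀ a a', (if a' < a then ∑ j ∈ Finset.univ.filter (fun j => σ j = a'),
      (h a' j - h a j + β * ((P a' - P a) *ᵥ F) j) * x a j else 0) =
      -(if a' < a then g a a' else 0) := by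
    refine fun a a' => ?_
    split_ifs
    · rw [← hg, ← Finset.sum_neg_distrib]
      refine Finset.sum_congr rfl fun j _ => ?_
      rw [← advantage_sub_advantage_apply, ← advantage_sub_advantage_apply]
      ring
    · rw [neg_zero]
  have htotal : ∑ a, ∑ a', g a a' = ∑ a, x a ⬝ᵥ h a - p ⬝ᵥ F := by
    rw [← sum_dotProduct_advantage P β h x p F hflow]
    simp only [g, Finset.sum_fiberwise, dotProduct, mul_comm]
  have hsplit := Finset.sum_sum_eq_sum_lt_add_sum_gt g fun a =>
    Finset.sum_eq_zero fun j hj => by rw [← (Finset.mem_filter.mp hj).2, hadv, zero_mul]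
  simp only [hg, hg', Finset.sum_neg_distrib]
  linear_combination hsplit.symm.trans htotal

/-- Lemma 4.1(a) (performance metric decomposition): for any occupancy measures
`x^a` satisfying `Σ_a x^a (I - βP^a) = p`, and any stationary deterministic
policy `σ` with cost vector `F`,
`F_p(S) + Σ_{a<a'} Σ_{j∈S_{a'}} f_j^{a,a'}(S) x_j^a
  = F_p(π) + Σ_{a'<a} Σ_{j∈S_{a'}} f_j^{a',a}(S) x_j^a`. -/
theorem stmt7 {N : Type*} [Fintype N] [DecidableEq N] {A : ℕ}
    (P : Fin (A + 1) → Matrix N N ℝ)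
    (hP0 : ∀ a i j, 0 ≤ P a i j) (hP1 : ∀ a i, ∑ j, P a i j = 1)
    (β : ℝ) (hβ0 : 0 < β) (hβ1 : β < 1)
    (h : Fin (A + 1) → N → ℝ) (p : N → ℝ)
    (σ : N → Fin (A + 1)) (F : N → ℝ)
    (hF : ∀ i, F i = h (σ i) i + β * (P (σ i) *ᵥ F) i)
    (x : Fin (A + 1) → N → ℝ)
    (hflow : (∑ a, x a ᵥ* ((1 : Matrix N N ℝ) - β • P a)) = p) :
    p ⬝ᵥ F +
      ∑ a, ∑ a', (if a < a' then
        ∑ j ∈ Finset.univ.filter (fun j => σ j = a'),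
          (h a j - h a' j + β * ((P a - P a') *ᵥ F) j) * x a j
        else 0)
    =
    (∑ a, x a ⬝ᵥ h a) +
      ∑ a, ∑ a', (if a' < a then
        ∑ j ∈ Finset.univ.filter (fun j => σ j = a'),
          (h a' j - h a j + β * ((P a' - P a) *ᵥ F) j) * x a j
        else 0) :=
  stmt7_general P β h p σ F hF x hflow
end

section
/- Under the same setup with resource usages q^a and G(S), the resource decomposition holds: G_p(π) + Σ_{a < a'} Σ_{j ∈ S_{a'}} g_j^{a,a'}(S) x_{pj}^a(π) = G_p(S) + Σ_{a' < a} Σ_{j ∈ S_{a'}} g_j^{a',a}(S) x_{pj}^a(π), where G_p(π) = Σ_a x_p^a(π) · q^a and G_p(S) = p · G(S). -/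
/-!
Write `gain a a' j` for the one-step change `g_j^{a,a'}(S)` of the Bellman lookahead
`q^a_j + β (P^a G)_j` when action `a` is replaced by `a'` at state `j`. Since `G` is the fixed
point of the lookahead along `σ`, the gains `gain a (σ j) j` summed against `x^a` add up, over all
actions, to `x^a (I - βP^a) G - x^a · q^a`, and the flow equation turns their total into
`p · G - G_p(π)`. The gain is antisymmetric with zero diagonal, so this total splits into the
part with `a < a'` minus the part with `a' < a`, which is the decomposition.
-/

open Matrix

theorem Finset.sum_sum_ite_lt_add_sum_sum_ite_gt {ι M : Type*} [Fintype ι] [LinearOrder ι]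
    [AddCommMonoid M] (f : ι → ι → M) (hf : ∀ a, f a a = 0) :
    ∑ a, ∑ b, (if a < b then f a b else 0) + ∑ a, ∑ b, (if b < a then f a b else 0)
      = ∑ a, ∑ b, f a b := by
  simp only [← Finset.sum_add_distrib]
  refine Finset.sum_congr rfl fun a _ => Finset.sum_congr rfl fun b _ => ?_
  rcases lt_trichotomy a b with h | rfl | h
  · simp [h, h.not_gt]
  · simp [hf]
  · simp [h, h.not_gt]

section Gain

variable {N α : Type*} [Fintype N] (P : α → Matrix N N ℝ) (β : ℝ) (q : α → N → ℝ) (G : N → ℝ)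

def gain (a a' : α) (j : N) : ℝ :=
  q a' j - q a j + β * ((P a' - P a) *ᵥ G) j

theorem gain_eq_sub (a a' : α) (j : N) :
    gain P β q G a a' j = (q a' j + β * (P a' *ᵥ G) j) - (q a j + β * (P a *ᵥ G) j) := by
  simp only [gain, sub_mulVec, Pi.sub_apply]
  ring

theorem gain_swap (a a' : α) (j : N) : gain P β q G a' a j = -gain P β q G a a' j := by
  simp only [gain_eq_sub, neg_sub]

theorem gain_self (a : α) (j : N) : gain P β q G a a j = 0 := by
  simp [gain_eq_sub]

variable {P β q G}

theorem gain_policy {σ : N → α} (hG : ∀ i, G i = q (σ i) i + β * (P (σ i) *ᵥ G) i)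
    (a : α) (j : N) : gain P β q G a (σ j) j = G j - q a j - β * (P a *ᵥ G) j := by
  rw [gain_eq_sub, ← hG]
  ring

theorem sum_sum_fiber_gain_mul [Fintype α] [DecidableEq α] {σ : N → α}
    (hG : ∀ i, G i = q (σ i) i + β * (P (σ i) *ᵥ G) i) (a : α) (y : N → ℝ) :
    ∑ a', ∑ j ∈ Finset.univ.filter (fun j => σ j = a'), gain P β q G a a' j * y j
      = y ⬝ᵥ (G - β • (P a *ᵥ G)) - y ⬝ᵥ q a := by
  have hfiber : ∀ a', ∑ j ∈ Finset.univ.filter (fun j => σ j = a'), gain P β q G a a' j * y j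
      = ∑ j ∈ Finset.univ.filter (fun j => σ j = a'), gain P β q G a (σ j) j * y j :=
    fun a' => Finset.sum_congr rfl fun j hj => by rw [(Finset.mem_filter.1 hj).2]
  simp only [hfiber, Finset.sum_fiberwise, gain_policy hG, dotProduct, Pi.sub_apply,
    Pi.smul_apply, smul_eq_mul, ← Finset.sum_sub_distrib]
  exact Finset.sum_congr rfl fun j _ => by ring

theorem sum_dotProduct_of_flow [DecidableEq N] {x : α → N → ℝ} {p : N → ℝ} (s : Finset α)
    (hflow : ∑ a ∈ s, x a ᵥ* ((1 : Matrix N N ℝ) - β • P a) = p) :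
    ∑ a ∈ s, x a ⬝ᵥ (G - β • (P a *ᵥ G)) = p ⬝ᵥ G := by
  simp only [← hflow, sum_dotProduct, ← dotProduct_mulVec, sub_mulVec, one_mulVec,
    smul_mulVec]

end Gain

theorem stmt8_general {N : Type*} [Fintype N] [DecidableEq N] {A : ℕ}
    (P : Fin (A + 1) → Matrix N N ℝ)
    (β : ℝ)
    (q : Fin (A + 1) → N → ℝ) (p : N → ℝ)
    (σ : N → Fin (A + 1)) (G : N → ℝ)
    (hG : ∀ i, G i = q (σ i) i + β * (P (σ i) *ᵥ G) i)
    (x : Fin (A + 1) → N → ℝ)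
    (hflow : (∑ a, x a ᵥ* ((1 : Matrix N N ℝ) - β • P a)) = p) :
    (∑ a, x a ⬝ᵥ q a) +
      ∑ a, ∑ a', (if a < a' then
        ∑ j ∈ Finset.univ.filter (fun j => σ j = a'),
          (q a' j - q a j + β * ((P a' - P a) *ᵥ G) j) * x a j
        else 0)
    =
    p ⬝ᵥ G +
      ∑ a, ∑ a', (if a' < a then
        ∑ j ∈ Finset.univ.filter (fun j => σ j = a'),
          (q a j - q a' j + β * ((P a - P a') *ᵥ G) j) * x a j
        else 0) := by
  set f : Fin (A + 1) → Fin (A + 1) → ℝ := fun a a' =>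
    ∑ j ∈ Finset.univ.filter (fun j => σ j = a'), gain P β q G a a' j * x a j
  have hswap : ∀ a a', ∑ j ∈ Finset.univ.filter (fun j => σ j = a'),
      (q a j - q a' j + β * ((P a - P a') *ᵥ G) j) * x a j = -f a a' := fun a a' => by
    simp only [f, ← Finset.sum_neg_distrib, ← neg_mul, ← gain_swap]
    rfl
  have hsplit := Finset.sum_sum_ite_lt_add_sum_sum_ite_gt f
    fun a => by simp only [f, gain_self, zero_mul, Finset.sum_const_zero]
  have htotal : ∑ a, ∑ a', f a a' = p ⬝ᵥ G - ∑ a, x a ⬝ᵥ q a := by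
    simp only [f, sum_sum_fiber_gain_mul hG, Finset.sum_sub_distrib,
      sum_dotProduct_of_flow _ hflow]
  have hneg : ∀ a a' : Fin (A + 1),
      (if a' < a then -f a a' else 0) = -(if a' < a then f a a' else 0) :=
    fun a a' => by split_ifs <;> simp
  simp only [hswap, hneg, Finset.sum_neg_distrib]
  change _ + ∑ a, ∑ a', (if a < a' then f a a' else 0) = _
  linarith

/-- Lemma 4.1(b) (resource metric decomposition): for any occupancy measures
`x^a` satisfying `Σ_a x^a (I - βP^a) = p`, and any stationary deterministic
policy `σ` with resource vector `G`,
`G_p(π) + Σ_{a<a'} Σ_{j∈S_{a'}} g_j^{a,a'}(S) x_j^a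
  = G_p(S) + Σ_{a'<a} Σ_{j∈S_{a'}} g_j^{a',a}(S) x_j^a`,
where `g_j^{a,a'}(S) := q_j^{a'} - q_j^{a} + β((P^{a'} - P^{a})G)_j`. -/
theorem stmt8 {N : Type*} [Fintype N] [DecidableEq N] {A : ℕ}
    (P : Fin (A + 1) → Matrix N N ℝ)
    (hP0 : ∀ a i j, 0 ≤ P a i j) (hP1 : ∀ a i, ∑ j, P a i j = 1)
    (β : ℝ) (hβ0 : 0 < β) (hβ1 : β < 1)
    (q : Fin (A + 1) → N → ℝ) (p : N → ℝ)
    (σ : N → Fin (A + 1)) (G : N → ℝ)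
    (hG : ∀ i, G i = q (σ i) i + β * (P (σ i) *ᵥ G) i)
    (x : Fin (A + 1) → N → ℝ)
    (hflow : (∑ a, x a ᵥ* ((1 : Matrix N N ℝ) - β • P a)) = p) :
    (∑ a, x a ⬝ᵥ q a) +
      ∑ a, ∑ a', (if a < a' then
        ∑ j ∈ Finset.univ.filter (fun j => σ j = a'),
          (q a' j - q a j + β * ((P a' - P a) *ᵥ G) j) * x a j
        else 0)
    =
    p ⬝ᵥ G +
      ∑ a, ∑ a', (if a' < a then
        ∑ j ∈ Finset.univ.filter (fun j => σ j = a'),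
          (q a j - q a' j + β * ((P a - P a') *ᵥ G) j) * x a j
        else 0) :=
  stmt8_general P β q p σ G hG x hflow
end

section
/- Let S be a stationary deterministic policy, a ≠ a' actions, j ∈ S_a, and let T S := T_j^{a,a'} S be the policy that coincides with S except that it selects a' instead of a in state j. Then F_p(S) = F_p(T S) + f_j^{a,a'}(S) · x_{pj}^{a'}(T S), where x_{pj}^{a'}(T S) is the discounted occupancy of the pair (j, a') under policy T S starting from distribution p. -/
/-!
Subtracting the Bellman equations of `S` and `TS` gives
`(I - βP^{TS}) (F(S) - F(TS)) = f^{a,a'}_j(S) e_j`, because the two policies agree away from `j`.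
As `P^{TS}` is stochastic and `β < 1`, the matrix `I - βP^{TS}` is strictly diagonally dominant,
hence invertible, and pairing `F(S) - F(TS) = (I - βP^{TS})⁻¹ (f^{a,a'}_j(S) e_j)` with `p` gives
the identity.
-/

open Matrix

section

variable {N A : Type*} [Fintype N]

def policyMatrix (P : A → Matrix N N ℝ) (σ : N → A) : Matrix N N ℝ :=
  Matrix.of fun i j => P (σ i) i j

/-- The paper's `f_j^{a,a'}(S)` when `F = F(S)`. -/
def marginalCost (P : A → Matrix N N ℝ) (h : A → N → ℝ) (β : ℝ) (F : N → ℝ) (a a' : A)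
    (j : N) : ℝ :=
  h a j - h a' j + β * ((P a - P a') *ᵥ F) j

variable [DecidableEq N]

theorem policyMatrix_mem_rowStochastic {P : A → Matrix N N ℝ}
    (hP : ∀ a, P a ∈ rowStochastic ℝ N) (σ : N → A) : policyMatrix P σ ∈ rowStochastic ℝ N :=
  mem_rowStochastic_iff_sum.2
    ⟨fun i _ => nonneg_of_mem_rowStochastic (hP (σ i)),
      fun i => sum_row_of_mem_rowStochastic (hP (σ i)) i⟩

theorem isUnit_one_sub_smul_of_mem_rowStochastic {Q : Matrix N N ℝ}
    (hQ : Q ∈ rowStochastic ℝ N) {β : ℝ} (hβ0 : 0 ≤ β) (hβ1 : β < 1) :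
    IsUnit (1 - β • Q) := by
  refine (isUnit_iff_isUnit_det _).2 (isUnit_iff_ne_zero.2 (det_ne_zero_of_sum_row_lt_diag ?_))
  intro k
  have hoff : ∑ j ∈ Finset.univ.erase k, ‖(1 - β • Q) k j‖ = β * (1 - Q k k) := by
    rw [← sum_row_of_mem_rowStochastic hQ k, ← Finset.add_sum_erase _ _ (Finset.mem_univ k),
      add_sub_cancel_left, Finset.mul_sum]
    refine Finset.sum_congr rfl fun j hj => ?_
    rw [Matrix.sub_apply, one_apply_ne (Finset.ne_of_mem_erase hj).symm, Matrix.smul_apply,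
      smul_eq_mul, zero_sub, norm_neg,
      Real.norm_of_nonneg (mul_nonneg hβ0 (nonneg_of_mem_rowStochastic hQ))]
  have hdiag : ‖(1 - β • Q) k k‖ = 1 - β * Q k k := by
    rw [Matrix.sub_apply, one_apply_eq, Matrix.smul_apply, smul_eq_mul, Real.norm_of_nonneg]
    nlinarith [le_one_of_mem_rowStochastic hQ (i := k) (j := k)]
  rw [hoff, hdiag]
  linarith

theorem one_sub_smul_policyMatrix_mulVec_sub {P : A → Matrix N N ℝ} {h : A → N → ℝ} {β : ℝ}
    {σ τ : N → A} {F G : N → ℝ}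
    (hF : ∀ i, F i = h (σ i) i + β * (P (σ i) *ᵥ F) i)
    (hG : ∀ i, G i = h (τ i) i + β * (P (τ i) *ᵥ G) i) :
    (1 - β • policyMatrix P τ) *ᵥ (F - G) = fun i => marginalCost P h β F (σ i) (τ i) i := by
  funext i
  have hQ (v : N → ℝ) : (policyMatrix P τ *ᵥ v) i = (P (τ i) *ᵥ v) i := rfl
  simp only [sub_mulVec, one_mulVec, smul_mulVec, mulVec_sub, Pi.sub_apply, Pi.smul_apply,
    smul_eq_mul, hQ, marginalCost]
  linarith [hF i, hG i]

theorem marginalCost_update_eq_single {P : A → Matrix N N ℝ} {h : A → N → ℝ} {β : ℝ}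
    {F : N → ℝ} (σ : N → A) (j : N) (a' : A) :
    (fun i => marginalCost P h β F (σ i) (Function.update σ j a' i) i) =
      Pi.single j (marginalCost P h β F (σ j) a' j) := by
  funext i
  rcases eq_or_ne i j with rfl | hij
  · simp
  · simp [hij, marginalCost]

theorem dotProduct_eq_add_of_mulVec_sub_eq_single {M : Matrix N N ℝ} (hM : IsUnit M)
    {F G : N → ℝ} {j : N} {c : ℝ} (hFG : M *ᵥ (F - G) = Pi.single j c) (p : N → ℝ) :
    p ⬝ᵥ F = p ⬝ᵥ G + c * (p ᵥ* M⁻¹) j := by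
  have hsol : F - G = M⁻¹ *ᵥ Pi.single j c := by
    rw [← hFG, mulVec_mulVec, nonsing_inv_mul _ ((isUnit_iff_isUnit_det M).1 hM), one_mulVec]
  have := congrArg (p ⬝ᵥ ·) hsol
  simp only [dotProduct_sub, dotProduct_mulVec, dotProduct_single] at this
  linarith

end

theorem stmt9_general {N : Type*} [Fintype N] [DecidableEq N] {A : Type*}
    (P : A → Matrix N N ℝ)
    (hP0 : ∀ a i j, 0 ≤ P a i j) (hP1 : ∀ a i, ∑ j, P a i j = 1)
    (β : ℝ) (hβ0 : 0 < β) (hβ1 : β < 1)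
    (h : A → N → ℝ)
    (σ : N → A) (j0 : N) (a a' : A) (hja : σ j0 = a)
    (F : N → ℝ) (hF : ∀ i, F i = h (σ i) i + β * (P (σ i) *ᵥ F) i)
    (FT : N → ℝ)
    (hFT : ∀ i, FT i = h (Function.update σ j0 a' i) i +
      β * (P (Function.update σ j0 a' i) *ᵥ FT) i)
    (p : N → ℝ) :
    p ⬝ᵥ F = p ⬝ᵥ FT +
      (h a j0 - h a' j0 + β * ((P a - P a') *ᵥ F) j0) *
        (p ᵥ* (((1 : Matrix N N ℝ) -
          β • Matrix.of (fun i j => P (Function.update σ j0 a' i) i j))⁻¹)) j0 := by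
  have hP (b : A) : P b ∈ rowStochastic ℝ N := mem_rowStochastic_iff_sum.2 ⟨hP0 b, hP1 b⟩
  have hM := isUnit_one_sub_smul_of_mem_rowStochastic
    (policyMatrix_mem_rowStochastic hP (Function.update σ j0 a')) hβ0.le hβ1
  have hres := one_sub_smul_policyMatrix_mulVec_sub hF hFT
  rw [marginalCost_update_eq_single, hja] at hres
  exact dotProduct_eq_add_of_mulVec_sub_eq_single hM hres p

/-- Lemma 4.2(a): if `TS := T_j^{a,a'} S` modifies policy `σ` only at state `j0`
(where `σ j0 = a`), selecting `a'` there instead, then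
`F_p(S) = F_p(TS) + f_{j0}^{a,a'}(S) · x_{p,j0}^{a'}(TS)`, where
`x_{p,j0}^{a'}(TS) = (p (I - βP^{TS})⁻¹)_{j0}` is the discounted occupancy of
`(j0, a')` under `TS` starting from `p`. -/
theorem stmt9 {N : Type*} [Fintype N] [DecidableEq N] {A : Type*} [Fintype A]
    (P : A → Matrix N N ℝ)
    (hP0 : ∀ a i j, 0 ≤ P a i j) (hP1 : ∀ a i, ∑ j, P a i j = 1)
    (β : ℝ) (hβ0 : 0 < β) (hβ1 : β < 1)
    (h : A → N → ℝ)
    (σ : N → A) (j0 : N) (a a' : A) (hja : σ j0 = a) (hne : a ≠ a')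
    (F : N → ℝ) (hF : ∀ i, F i = h (σ i) i + β * (P (σ i) *ᵥ F) i)
    (FT : N → ℝ)
    (hFT : ∀ i, FT i = h (Function.update σ j0 a' i) i +
      β * (P (Function.update σ j0 a' i) *ᵥ FT) i)
    (p : N → ℝ) :
    p ⬝ᵥ F = p ⬝ᵥ FT +
      (h a j0 - h a' j0 + β * ((P a - P a') *ᵥ F) j0) *
        (p ᵥ* (((1 : Matrix N N ℝ) -
          β • Matrix.of (fun i j => P (Function.update σ j0 a' i) i j))⁻¹)) j0 :=
  stmt9_general P hP0 hP1 β hβ0 hβ1 h σ j0 a a' hja F hF FT hFT p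
end

section
/- With the same setup, the resource metric satisfies G_p(T_j^{a,a'} S) = G_p(S) + g_j^{a,a'}(S) · x_{pj}^{a'}(T_j^{a,a'} S). -/
/-!
Write `T` for the transition matrix of the modified policy and `M := 1 - β T`, which is invertible
because `T` is row stochastic and `β < 1`. Both value vectors are mapped by `M` to (almost) the
cost vector of the modified policy: `M G(TS)` is it exactly, while `M G(S)` differs from it only in
coordinate `j`, by `g_j^{a,a'}(S)`. Hence `G(TS) - G(S) = g_j^{a,a'}(S) • M⁻¹ e_j`, and pairing with
`p` gives the formula, since `x_{pj}^{a'}(TS) = (p M⁻¹)_j`.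
-/

open Matrix

namespace Matrix

variable {n : Type*} [Fintype n] [DecidableEq n]

-- `1 - β Q` is strictly diagonally dominant: off the diagonal, row `k` sums to `β (1 - Q k k)`.
theorem isUnit_det_one_sub_smul_of_mem_rowStochastic {Q : Matrix n n ℝ}
    (hQ : Q ∈ rowStochastic ℝ n) {β : ℝ} (hβ0 : 0 ≤ β) (hβ1 : β < 1) :
    IsUnit (1 - β • Q).det := by
  refine isUnit_iff_ne_zero.mpr (det_ne_zero_of_sum_row_lt_diag fun k => ?_)
  have hrow := sum_row_of_mem_rowStochastic hQ k
  rw [← Finset.add_sum_erase _ _ (Finset.mem_univ k)] at hrow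
  have hQkk : Q k k ≤ 1 := by
    linarith [Finset.sum_nonneg fun j (_ : j ∈ Finset.univ.erase k) =>
      nonneg_of_mem_rowStochastic hQ (i := k) (j := j)]
  have hoff : ∑ j ∈ Finset.univ.erase k, ‖(1 - β • Q) k j‖ = β * (1 - Q k k) := by
    rw [← hrow, add_sub_cancel_left, Finset.mul_sum]
    refine Finset.sum_congr rfl fun j hj => ?_
    rw [sub_apply, one_apply_ne' (Finset.ne_of_mem_erase hj), smul_apply, smul_eq_mul, zero_sub,
      norm_neg, Real.norm_of_nonneg (mul_nonneg hβ0 (nonneg_of_mem_rowStochastic hQ))]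
  have hdiag : ‖(1 - β • Q) k k‖ = 1 - β * Q k k := by
    rw [sub_apply, one_apply_eq, smul_apply, smul_eq_mul, Real.norm_of_nonneg]
    nlinarith
  rw [hoff, hdiag]
  linarith

variable {R : Type*} [CommRing R]

theorem dotProduct_eq_add_of_mulVec_sub_eq_single {M : Matrix n n R} (hM : IsUnit M.det)
    {x y : n → R} {j : n} {c : R} (h : M *ᵥ (x - y) = Pi.single j c) (p : n → R) :
    p ⬝ᵥ x = p ⬝ᵥ y + c * (p ᵥ* M⁻¹) j := by
  have hxy : x - y = M⁻¹ *ᵥ Pi.single j c := by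
    rw [← h, mulVec_mulVec, nonsing_inv_mul M hM, one_mulVec]
  have hpair : p ⬝ᵥ (x - y) = c * (p ᵥ* M⁻¹) j := by
    rw [hxy, dotProduct_mulVec, dotProduct_single, mul_comm]
  rw [← hpair, dotProduct_sub, add_sub_cancel]

end Matrix

section Policy

variable {N A : Type*} [Fintype N] [DecidableEq N]

def policyTransition (P : A → Matrix N N ℝ) (σ : N → A) : Matrix N N ℝ :=
  Matrix.of fun i j => P (σ i) i j

def policyCost (q : A → N → ℝ) (σ : N → A) : N → ℝ :=
  fun i => q (σ i) i

theorem policyTransition_mem_rowStochastic {P : A → Matrix N N ℝ}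
    (hP0 : ∀ a i j, 0 ≤ P a i j) (hP1 : ∀ a i, ∑ j, P a i j = 1) (σ : N → A) :
    policyTransition P σ ∈ rowStochastic ℝ N :=
  mem_rowStochastic_iff_sum.mpr ⟨fun i j => hP0 (σ i) i j, fun i => hP1 (σ i) i⟩

theorem one_sub_smul_policyTransition_mulVec_apply (P : A → Matrix N N ℝ) (σ : N → A) (β : ℝ)
    (v : N → ℝ) (i : N) :
    ((1 - β • policyTransition P σ) *ᵥ v) i = v i - β * (P (σ i) *ᵥ v) i := by
  simp only [sub_mulVec, one_mulVec, smul_mulVec, Pi.sub_apply, Pi.smul_apply, smul_eq_mul]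
  rfl

theorem one_sub_smul_policyTransition_mulVec_of_bellman {P : A → Matrix N N ℝ} {q : A → N → ℝ}
    {σ : N → A} {β : ℝ} {G : N → ℝ} (hG : ∀ i, G i = q (σ i) i + β * (P (σ i) *ᵥ G) i) :
    (1 - β • policyTransition P σ) *ᵥ G = policyCost q σ := by
  funext i
  rw [one_sub_smul_policyTransition_mulVec_apply, policyCost, hG i, add_sub_cancel_right]

theorem one_sub_smul_policyTransition_update_mulVec_of_bellman {P : A → Matrix N N ℝ}
    {q : A → N → ℝ} {σ : N → A} {β : ℝ} {G : N → ℝ}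
    (hG : ∀ i, G i = q (σ i) i + β * (P (σ i) *ᵥ G) i) {j : N} {a a' : A} (hja : σ j = a) :
    (1 - β • policyTransition P (Function.update σ j a')) *ᵥ G =
      policyCost q (Function.update σ j a') -
        Pi.single j (q a' j - q a j + β * ((P a' - P a) *ᵥ G) j) := by
  funext i
  rw [one_sub_smul_policyTransition_mulVec_apply, Pi.sub_apply, policyCost]
  rcases eq_or_ne i j with rfl | hij
  · rw [Function.update_self, Pi.single_eq_same, hG i, hja, sub_mulVec, Pi.sub_apply]
    ring
  · rw [Function.update_of_ne hij, Pi.single_eq_of_ne hij, hG i]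
    ring

end Policy

theorem stmt10_general {N : Type*} [Fintype N] [DecidableEq N] {A : Type*}
    (P : A → Matrix N N ℝ)
    (hP0 : ∀ a i j, 0 ≤ P a i j) (hP1 : ∀ a i, ∑ j, P a i j = 1)
    (β : ℝ) (hβ0 : 0 < β) (hβ1 : β < 1)
    (q : A → N → ℝ)
    (σ : N → A) (j0 : N) (a a' : A) (hja : σ j0 = a)
    (G : N → ℝ) (hG : ∀ i, G i = q (σ i) i + β * (P (σ i) *ᵥ G) i)
    (GT : N → ℝ)
    (hGT : ∀ i, GT i = q (Function.update σ j0 a' i) i +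
      β * (P (Function.update σ j0 a' i) *ᵥ GT) i)
    (p : N → ℝ) :
    p ⬝ᵥ GT = p ⬝ᵥ G +
      (q a' j0 - q a j0 + β * ((P a' - P a) *ᵥ G) j0) *
        (p ᵥ* (((1 : Matrix N N ℝ) -
          β • Matrix.of (fun i j => P (Function.update σ j0 a' i) i j))⁻¹)) j0 := by
  have hM : IsUnit (1 - β • policyTransition P (Function.update σ j0 a')).det :=
    isUnit_det_one_sub_smul_of_mem_rowStochastic
      (policyTransition_mem_rowStochastic hP0 hP1 _) hβ0.le hβ1
  refine dotProduct_eq_add_of_mulVec_sub_eq_single hM ?_ p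
  rw [mulVec_sub, one_sub_smul_policyTransition_mulVec_of_bellman hGT,
    one_sub_smul_policyTransition_update_mulVec_of_bellman hG hja, sub_sub_cancel]

/-- Lemma 4.2(c): if `TS := T_j^{a,a'} S` modifies policy `σ` only at state `j0`
(where `σ j0 = a`), selecting `a'` there instead, then
`G_p(TS) = G_p(S) + g_{j0}^{a,a'}(S) · x_{p,j0}^{a'}(TS)`, where
`g_{j0}^{a,a'}(S) := q_{j0}^{a'} - q_{j0}^{a} + β((P^{a'} - P^{a})G(S))_{j0}`
and `x_{p,j0}^{a'}(TS) = (p (I - βP^{TS})⁻¹)_{j0}`. -/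
theorem stmt10 {N : Type*} [Fintype N] [DecidableEq N] {A : Type*} [Fintype A]
    (P : A → Matrix N N ℝ)
    (hP0 : ∀ a i j, 0 ≤ P a i j) (hP1 : ∀ a i, ∑ j, P a i j = 1)
    (β : ℝ) (hβ0 : 0 < β) (hβ1 : β < 1)
    (q : A → N → ℝ)
    (σ : N → A) (j0 : N) (a a' : A) (hja : σ j0 = a) (hne : a ≠ a')
    (G : N → ℝ) (hG : ∀ i, G i = q (σ i) i + β * (P (σ i) *ᵥ G) i)
    (GT : N → ℝ)
    (hGT : ∀ i, GT i = q (Function.update σ j0 a' i) i +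
      β * (P (Function.update σ j0 a' i) *ᵥ GT) i)
    (p : N → ℝ) :
    p ⬝ᵥ GT = p ⬝ᵥ G +
      (q a' j0 - q a j0 + β * ((P a' - P a) *ᵥ G) j0) *
        (p ᵥ* (((1 : Matrix N N ℝ) -
          β • Matrix.of (fun i j => P (Function.update σ j0 a' i) i j))⁻¹)) j0 :=
  stmt10_general P hP0 hP1 β hβ0 hβ1 q σ j0 a a' hja G hG GT hGT p
end

section
/- Suppose marginal resource metrics are positive: g_j^{a,a'}(S) > 0 for all j, all a < a', and all policies S in a family F, and suppose the initial distribution p has all entries positive. Then for any nonnegative occupancy vectors x^a ≥ 0 satisfying Σ_a x^a(I - βP^a) = p and any S ∈ F: G_p(x) + Σ_{a < a'} Σ_{j ∈ S_{a'}} g_j^{a,a'}(S) x_j^{a} ≥ G_p(S), with equality if and only if x_j^{a'} = 0 for all j ∈ S_a and a' > a (i.e., the policy never uses an action strictly higher than that of S), where G_p(x) := Σ_a x^a · q^a and G_p(S) := p · G(S). -/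
/-!
Let `g_j^{a,a'}` be the marginal resource metric of switching from `a` to `a'` at `j`, computed
from the value `G` of the policy `σ`. The Bellman equation for `G` gives
`((1 - β P^a) G)_j = q^a_j + g_j^{a, σ j}`, so pairing the flow constraint with `G` expresses
`p ⬝ᵥ G` through `x`. Since `g` is antisymmetric in `a, a'`, the difference between the two
sides of the conservation law collapses to `Σ_{σ j < a} g_j^{σ j, a} x^a_j`, a sum of
nonnegative terms which vanishes exactly when `x^a_j = 0` for every `a > σ j`.
-/

open Matrix

namespace PartialConservation

variable {N ι : Type*} [Fintype N]

/-- The marginal resource metric `g_j^{a,a'}` of a value vector `G`. -/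
def marginal (P : ι → Matrix N N ℝ) (β : ℝ) (q : ι → N → ℝ) (G : N → ℝ) (a a' : ι) (j : N) :
    ℝ :=
  q a' j - q a j + β * ((P a' - P a) *ᵥ G) j

variable {P : ι → Matrix N N ℝ} {β : ℝ} {q : ι → N → ℝ} {G : N → ℝ} {σ : N → ι}
  {p : N → ℝ} {x : ι → N → ℝ}

theorem marginal_swap (a a' : ι) (j : N) :
    marginal P β q G a' a j = -marginal P β q G a a' j := by
  simp only [marginal, sub_mulVec, Pi.sub_apply]
  ring

theorem one_sub_smul_mulVec_of_bellman [DecidableEq N]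
    (hG : ∀ i, G i = q (σ i) i + β * (P (σ i) *ᵥ G) i) (a : ι) (j : N) :
    ((1 - β • P a) *ᵥ G) j = q a j + marginal P β q G a (σ j) j := by
  simp only [sub_mulVec, one_mulVec, smul_mulVec, Pi.sub_apply, Pi.smul_apply, smul_eq_mul,
    marginal]
  rw [hG j]
  ring

theorem dotProduct_eq_of_flow [Fintype ι] [DecidableEq N]
    (hflow : ∑ a, x a ᵥ* (1 - β • P a) = p)
    (hG : ∀ i, G i = q (σ i) i + β * (P (σ i) *ᵥ G) i) :
    p ⬝ᵥ G = ∑ a, ∑ j, x a j * (q a j + marginal P β q G a (σ j) j) := by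
  rw [← hflow, sum_dotProduct]
  refine Finset.sum_congr rfl fun a _ => ?_
  rw [← dotProduct_mulVec]
  simp only [dotProduct, one_sub_smul_mulVec_of_bellman hG]

variable [LinearOrder ι]

theorem ite_lt_marginal_mul_sub (a b : ι) (j : N) (y : ℝ) :
    (if a < b then marginal P β q G a b j * y else 0) - y * marginal P β q G a b j =
      if b < a then marginal P β q G b a j * y else 0 := by
  rcases lt_trichotomy a b with h | rfl | h
  · rw [if_pos h, if_neg h.asymm]
    ring
  · simp only [lt_irrefl, if_false, marginal, sub_self, zero_mulVec, Pi.zero_apply]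
    ring
  · rw [if_neg h.asymm, if_pos h, marginal_swap]
    ring

theorem slack_term_nonneg (hpos : ∀ j a a', a < a' → 0 < marginal P β q G a a' j)
    (hx : ∀ a j, 0 ≤ x a j) (a : ι) (j : N) :
    0 ≤ if σ j < a then marginal P β q G (σ j) a j * x a j else 0 := by
  split_ifs with h
  exacts [mul_nonneg (hpos j _ _ h).le (hx a j), le_rfl]

variable [Fintype ι]

theorem sum_ite_lt_sum_filter (f : ι → N → ℝ) (a : ι) :
    ∑ a', (if a < a' then ∑ j ∈ Finset.univ.filter (fun j => σ j = a'), f a' j else 0) =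
      ∑ j, if a < σ j then f (σ j) j else 0 := by
  rw [← Finset.sum_fiberwise Finset.univ σ]
  refine Finset.sum_congr rfl fun a' _ => ?_
  split_ifs with h
  · refine Finset.sum_congr rfl fun j hj => ?_
    rw [(Finset.mem_filter.mp hj).2, if_pos h]
  · refine (Finset.sum_eq_zero fun j hj => ?_).symm
    rw [(Finset.mem_filter.mp hj).2, if_neg h]

def slack (P : ι → Matrix N N ℝ) (β : ℝ) (q : ι → N → ℝ) (G : N → ℝ) (σ : N → ι)
    (x : ι → N → ℝ) : ℝ :=
  ∑ a, ∑ j, if σ j < a then marginal P β q G (σ j) a j * x a j else 0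

theorem sub_dotProduct_eq_slack [DecidableEq N]
    (hflow : ∑ a, x a ᵥ* (1 - β • P a) = p)
    (hG : ∀ i, G i = q (σ i) i + β * (P (σ i) *ᵥ G) i) :
    (∑ a, x a ⬝ᵥ q a) + ∑ a, ∑ a', (if a < a' then
        ∑ j ∈ Finset.univ.filter (fun j => σ j = a'), marginal P β q G a a' j * x a j else 0) -
      p ⬝ᵥ G = slack P β q G σ x := by
  rw [dotProduct_eq_of_flow hflow hG]
  simp only [sum_ite_lt_sum_filter, dotProduct, slack,
    ← Finset.sum_add_distrib, ← Finset.sum_sub_distrib]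
  refine Finset.sum_congr rfl fun a _ => Finset.sum_congr rfl fun j _ => ?_
  rw [← ite_lt_marginal_mul_sub a (σ j)]
  ring

theorem slack_nonneg (hpos : ∀ j a a', a < a' → 0 < marginal P β q G a a' j)
    (hx : ∀ a j, 0 ≤ x a j) : 0 ≤ slack P β q G σ x :=
  Finset.sum_nonneg fun a _ => Finset.sum_nonneg fun j _ => slack_term_nonneg hpos hx a j

theorem slack_eq_zero_iff (hpos : ∀ j a a', a < a' → 0 < marginal P β q G a a' j)
    (hx : ∀ a j, 0 ≤ x a j) :
    slack P β q G σ x = 0 ↔ ∀ j a, σ j < a → x a j = 0 := by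
  simp only [slack, Finset.sum_eq_zero_iff_of_nonneg fun a _ =>
      Finset.sum_nonneg fun j _ => slack_term_nonneg hpos hx a j,
    Finset.sum_eq_zero_iff_of_nonneg fun j _ => slack_term_nonneg hpos hx _ j,
    Finset.mem_univ, true_imp_iff, ite_eq_right_iff, mul_eq_zero]
  rw [forall_comm]
  refine forall₂_congr fun j a => imp_congr_right fun h => ?_
  simp [(hpos j _ _ h).ne']

theorem partial_conservation_law [DecidableEq N]
    (hpos : ∀ j a a', a < a' → 0 < marginal P β q G a a' j) (hx : ∀ a j, 0 ≤ x a j)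
    (hflow : ∑ a, x a ᵥ* (1 - β • P a) = p)
    (hG : ∀ i, G i = q (σ i) i + β * (P (σ i) *ᵥ G) i) :
    p ⬝ᵥ G ≤ (∑ a, x a ⬝ᵥ q a) + ∑ a, ∑ a', (if a < a' then
        ∑ j ∈ Finset.univ.filter (fun j => σ j = a'), marginal P β q G a a' j * x a j else 0) ∧
      ((∑ a, x a ⬝ᵥ q a) + ∑ a, ∑ a', (if a < a' then
        ∑ j ∈ Finset.univ.filter (fun j => σ j = a'), marginal P β q G a a' j * x a j else 0) =
          p ⬝ᵥ G ↔ ∀ j a', σ j < a' → x a' j = 0) := by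
  have hgap := sub_dotProduct_eq_slack hflow hG
  refine ⟨sub_nonneg.mp (hgap ▸ slack_nonneg hpos hx), ?_⟩
  rw [← sub_eq_zero, hgap, slack_eq_zero_iff hpos hx]

end PartialConservation

theorem stmt15_general {N : Type*} [Fintype N] [DecidableEq N] {A : ℕ}
    (P : Fin (A + 1) → Matrix N N ℝ)
    (β : ℝ)
    (q : Fin (A + 1) → N → ℝ)
    (𝓕 : Set (N → Fin (A + 1)))
    (hpos : ∀ σ ∈ 𝓕, ∀ G : N → ℝ,
      (∀ i, G i = q (σ i) i + β * (P (σ i) *ᵥ G) i) →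
      ∀ (j : N) (a a' : Fin (A + 1)), a < a' →
        0 < q a' j - q a j + β * ((P a' - P a) *ᵥ G) j)
    (p : N → ℝ)
    (x : Fin (A + 1) → N → ℝ) (hx : ∀ a j, 0 ≤ x a j)
    (hflow : (∑ a, x a ᵥ* ((1 : Matrix N N ℝ) - β • P a)) = p) :
    ∀ σ ∈ 𝓕, ∀ G : N → ℝ,
      (∀ i, G i = q (σ i) i + β * (P (σ i) *ᵥ G) i) →
      p ⬝ᵥ G ≤ (∑ a, x a ⬝ᵥ q a) +
        ∑ a, ∑ a', (if a < a' then
          ∑ j ∈ Finset.univ.filter (fun j => σ j = a'),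
            (q a' j - q a j + β * ((P a' - P a) *ᵥ G) j) * x a j
          else 0)
      ∧
      (((∑ a, x a ⬝ᵥ q a) +
        ∑ a, ∑ a', (if a < a' then
          ∑ j ∈ Finset.univ.filter (fun j => σ j = a'),
            (q a' j - q a j + β * ((P a' - P a) *ᵥ G) j) * x a j
          else 0) = p ⬝ᵥ G)
        ↔ ∀ (j : N) (a' : Fin (A + 1)), σ j < a' → x a' j = 0) :=
  fun σ hσ G hG => PartialConservation.partial_conservation_law (hpos σ hσ G hG) hx hflow hG

/-- Proposition 6.1(a.1) (partial conservation law): if the marginal resource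
metrics `g_j^{a,a'}(S)` are positive for all `j`, `a < a'`, and policies `S` in
a family `𝓕`, and the initial distribution `p` is entrywise positive, then for
any nonnegative occupancy vectors `x` satisfying the flow constraints and any
`S ∈ 𝓕`: `G_p(x) + Σ_{a<a'} Σ_{j∈S_{a'}} g_j^{a,a'}(S) x_j^a ≥ G_p(S)`, with
equality iff `x_j^{a'} = 0` whenever `a' > σ j`. -/
theorem stmt15 {N : Type*} [Fintype N] [DecidableEq N] {A : ℕ}
    (P : Fin (A + 1) → Matrix N N ℝ)
    (hP0 : ∀ a i j, 0 ≤ P a i j) (hP1 : ∀ a i, ∑ j, P a i j = 1)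
    (β : ℝ) (hβ0 : 0 < β) (hβ1 : β < 1)
    (q : Fin (A + 1) → N → ℝ)
    (𝓕 : Set (N → Fin (A + 1)))
    (hpos : ∀ σ ∈ 𝓕, ∀ G : N → ℝ,
      (∀ i, G i = q (σ i) i + β * (P (σ i) *ᵥ G) i) →
      ∀ (j : N) (a a' : Fin (A + 1)), a < a' →
        0 < q a' j - q a j + β * ((P a' - P a) *ᵥ G) j)
    (p : N → ℝ) (hp : ∀ i, 0 < p i)
    (x : Fin (A + 1) → N → ℝ) (hx : ∀ a j, 0 ≤ x a j)
    (hflow : (∑ a, x a ᵥ* ((1 : Matrix N N ℝ) - β • P a)) = p) :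
    ∀ σ ∈ 𝓕, ∀ G : N → ℝ,
      (∀ i, G i = q (σ i) i + β * (P (σ i) *ᵥ G) i) →
      p ⬝ᵥ G ≤ (∑ a, x a ⬝ᵥ q a) +
        ∑ a, ∑ a', (if a < a' then
          ∑ j ∈ Finset.univ.filter (fun j => σ j = a'),
            (q a' j - q a j + β * ((P a' - P a) *ᵥ G) j) * x a j
          else 0)
      ∧
      (((∑ a, x a ⬝ᵥ q a) +
        ∑ a, ∑ a', (if a < a' then
          ∑ j ∈ Finset.univ.filter (fun j => σ j = a'),
            (q a' j - q a j + β * ((P a' - P a) *ᵥ G) j) * x a j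
          else 0) = p ⬝ᵥ G)
        ↔ ∀ (j : N) (a' : Fin (A + 1)), σ j < a' → x a' j = 0) :=
  stmt15_general P β q 𝓕 hpos p x hx hflow
end

section
/- In the special case S = S^1 (the policy selecting the top action A in every state), the conservation law holds with equality for every occupancy solution: G_p(x) + Σ_{a < A} Σ_{j} g_j^{a,A}(S^1) x_j^{a} = G_p(S^1), for any x^a ≥ 0 with Σ_a x^a(I - βP^a) = p. -/
/-! Substituting `G = q^A + β P^A G` turns each action's term `x^a ⬝ q^a + g^{a,A} ⬝ x^a` into
`(x^a (I - β P^a)) ⬝ G`, and summing over `a` with the flow equation gives `p ⬝ G`. The term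
of the top action itself, `g^{A,A} = 0`, may be added to the correction sum for free. -/

open Matrix

theorem Fin.sum_filter_lt_last {M : Type*} [AddCommMonoid M] {n : ℕ} (f : Fin (n + 1) → M)
    (hf : f (Fin.last n) = 0) :
    ∑ a ∈ Finset.univ.filter (fun a => a < Fin.last n), f a = ∑ a, f a := by
  refine Finset.sum_filter_of_ne fun a _ hfa => ?_
  by_contra ha
  rw [le_antisymm (Fin.le_last a) (not_lt.mp ha)] at hfa
  exact hfa hf

theorem dotProduct_add_correction_eq_vecMul_dotProduct {N : Type*} [Fintype N] [DecidableEq N]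
    (P P' : Matrix N N ℝ) (β : ℝ) (q q' G x : N → ℝ) (hG : G = q' + β • (P' *ᵥ G)) :
    x ⬝ᵥ q + (q' - q + β • ((P' - P) *ᵥ G)) ⬝ᵥ x = (x ᵥ* (1 - β • P)) ⬝ᵥ G := by
  have hxG : x ⬝ᵥ G = x ⬝ᵥ q' + β * (x ⬝ᵥ P' *ᵥ G) := by
    simpa only [dotProduct_add, dotProduct_smul, smul_eq_mul] using congrArg (x ⬝ᵥ ·) hG
  rw [← dotProduct_mulVec, sub_mulVec, sub_mulVec, one_mulVec, smul_mulVec,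
    dotProduct_comm _ x]
  simp only [dotProduct_add, dotProduct_sub, dotProduct_smul, smul_eq_mul]
  linarith

theorem stmt16_general {N : Type*} [Fintype N] [DecidableEq N] {A : ℕ}
    (P : Fin (A + 1) → Matrix N N ℝ)
    (β : ℝ)
    (q : Fin (A + 1) → N → ℝ)
    (G1 : N → ℝ)
    (hG1 : ∀ i, G1 i = q (Fin.last A) i + β * (P (Fin.last A) *ᵥ G1) i)
    (p : N → ℝ)
    (x : Fin (A + 1) → N → ℝ)
    (hflow : (∑ a, x a ᵥ* ((1 : Matrix N N ℝ) - β • P a)) = p) :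
    (∑ a, x a ⬝ᵥ q a) +
      ∑ a ∈ Finset.univ.filter (fun a => a < Fin.last A), ∑ j,
        (q (Fin.last A) j - q a j + β * ((P (Fin.last A) - P a) *ᵥ G1) j) * x a j
    = p ⬝ᵥ G1 := by
  have hG : G1 = q (Fin.last A) + β • (P (Fin.last A) *ᵥ G1) := funext hG1
  rw [Fin.sum_filter_lt_last _ (by simp), ← hflow, sum_dotProduct, ← Finset.sum_add_distrib]
  refine Finset.sum_congr rfl fun a _ => ?_
  rw [← dotProduct_add_correction_eq_vecMul_dotProduct (P a) _ β (q a) _ G1 (x a) hG]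
  rfl

/-- Proposition 6.1(a.3): for `S^1` the policy selecting the top action `A` in
every state (with resource vector `G1`), the conservation law holds with
equality for every nonnegative occupancy solution:
`G_p(x) + Σ_{a<A} Σ_j g_j^{a,A}(S^1) x_j^a = G_p(S^1)`. -/
theorem stmt16 {N : Type*} [Fintype N] [DecidableEq N] {A : ℕ}
    (P : Fin (A + 1) → Matrix N N ℝ)
    (hP0 : ∀ a i j, 0 ≤ P a i j) (hP1 : ∀ a i, ∑ j, P a i j = 1)
    (β : ℝ) (hβ0 : 0 < β) (hβ1 : β < 1)
    (q : Fin (A + 1) → N → ℝ)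
    (G1 : N → ℝ)
    (hG1 : ∀ i, G1 i = q (Fin.last A) i + β * (P (Fin.last A) *ᵥ G1) i)
    (p : N → ℝ)
    (x : Fin (A + 1) → N → ℝ) (hx : ∀ a j, 0 ≤ x a j)
    (hflow : (∑ a, x a ᵥ* ((1 : Matrix N N ℝ) - β • P a)) = p) :
    (∑ a, x a ⬝ᵥ q a) +
      ∑ a ∈ Finset.univ.filter (fun a => a < Fin.last A), ∑ j,
        (q (Fin.last A) j - q a j + β * ((P (Fin.last A) - P a) *ᵥ G1) j) * x a j
    = p ⬝ᵥ G1 :=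
  stmt16_general P β q G1 hG1 p x hflow
end
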